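/- arXiv:1112.1206 — 3 statements merged into one kernel-verified Lean document; each statement's English description precedes it below -/
import Mathlib

section
/- Let B be the unit ball in ℝ^n, n ≥ 2, and let ψ ∈ H_m(ℝ^n) be a harmonic homogeneous polynomial of degree m. Then the function φ(x) = (1 − |x|²)·ψ(x) satisfies Δ²φ = 0 in B, φ = 0 on ∂B, and Δφ + (n+2m)·(∂φ/∂ν) = 0 on ∂B, where ν is the inward unit normal (so ∂φ/∂ν = −∂φ/∂r on |x|=1); i.e., φ is a biharmonic Steklov eigenfunction with eigenvalue λ = n + 2m. -/
open MvPolynomial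

/-- The polynomial Laplacian `Δp = ∑ i ∂²p/∂xᵢ²`. -/
noncomputable def polyLaplacian {n : ℕ} (p : MvPolynomial (Fin n) ℝ) : MvPolynomial (Fin n) ℝ :=
  ∑ i : Fin n, MvPolynomial.pderiv i (MvPolynomial.pderiv i p)

/-!
Write `S = ∑ xᵢ²`. Since `∂ᵢS = 2xᵢ`, the Leibniz rule gives
`Δ((1 - S)ψ) = -2nψ - 4 ∑ xᵢ ∂ᵢψ + (1 - S)Δψ`, which for harmonic `ψ` homogeneous of degree `m`
is `-(2n + 4m)ψ` by Euler's identity. Hence `Δφ` is a multiple of `ψ`, so `Δ²φ = 0`. On the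
sphere `1 - S` vanishes, so `φ = 0` there and the radial derivative `∑ xᵢ ∂ᵢφ` reduces to
`-2 ∑ xᵢ² ψ = -2ψ`; the boundary condition is then `-(2n + 4m)ψ + (n + 2m)·2ψ = 0`.
-/

section OneSubSumSq

variable {σ R : Type*} [Fintype σ]

lemma pderiv_sum_X_sq [CommSemiring R] (j : σ) :
    pderiv j (∑ i, X i ^ 2 : MvPolynomial σ R) = 2 * X j := by
  classical
  simp [pderiv_X, Pi.single_apply]

variable [CommRing R]

lemma pderiv_one_sub_sum_X_sq_mul (j : σ) (ψ : MvPolynomial σ R) :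
    pderiv j ((1 - ∑ i, X i ^ 2) * ψ) = -2 * X j * ψ + (1 - ∑ i, X i ^ 2) * pderiv j ψ := by
  rw [pderiv_mul, map_sub, pderiv_one, pderiv_sum_X_sq]
  ring

lemma pderiv_pderiv_one_sub_sum_X_sq_mul (j : σ) (ψ : MvPolynomial σ R) :
    pderiv j (pderiv j ((1 - ∑ i, X i ^ 2) * ψ)) =
      -2 * ψ - 4 * (X j * pderiv j ψ) + (1 - ∑ i, X i ^ 2) * pderiv j (pderiv j ψ) := by
  have h2 : pderiv j (2 : MvPolynomial σ R) = 0 := by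
    rw [← map_ofNat C 2, pderiv_C]
  rw [pderiv_one_sub_sum_X_sq_mul, map_add, pderiv_mul, pderiv_mul, pderiv_mul, map_sub,
    pderiv_one, pderiv_sum_X_sq, pderiv_X_self, map_neg, h2]
  ring

lemma eval_one_sub_sum_X_sq {x : σ → R} (hx : ∑ i, x i ^ 2 = 1) :
    eval x (1 - ∑ i, X i ^ 2) = 0 := by
  simp [hx]

lemma sum_mul_eval_pderiv_one_sub_sum_X_sq_mul {x : σ → R} (hx : ∑ i, x i ^ 2 = 1)
    (ψ : MvPolynomial σ R) :
    ∑ i, x i * eval x (pderiv i ((1 - ∑ j, X j ^ 2) * ψ)) = -2 * eval x ψ := by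
  simp only [pderiv_one_sub_sum_X_sq_mul, eval_add, eval_mul, eval_one_sub_sum_X_sq hx,
    zero_mul, add_zero, eval_X, eval_neg, eval_ofNat]
  calc ∑ i, x i * (-2 * x i * eval x ψ) = -2 * eval x ψ * ∑ i, x i ^ 2 := by
        rw [Finset.mul_sum]
        exact Finset.sum_congr rfl fun i _ => by ring
    _ = -2 * eval x ψ := by rw [hx, mul_one]

end OneSubSumSq

section Laplacian

variable {n : ℕ}

lemma polyLaplacian_C_mul (c : ℝ) (p : MvPolynomial (Fin n) ℝ) :
    polyLaplacian (C c * p) = C c * polyLaplacian p := by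
  simp only [polyLaplacian, pderiv_C_mul, Finset.mul_sum]

lemma polyLaplacian_one_sub_sum_X_sq_mul (ψ : MvPolynomial (Fin n) ℝ) :
    polyLaplacian ((1 - ∑ i, X i ^ 2) * ψ) =
      -(2 * n : MvPolynomial (Fin n) ℝ) * ψ - 4 * ∑ i, X i * pderiv i ψ + (1 - ∑ i, X i ^ 2) * polyLaplacian ψ := by
  simp only [polyLaplacian, pderiv_pderiv_one_sub_sum_X_sq_mul, Finset.sum_add_distrib,
    Finset.sum_sub_distrib, ← Finset.mul_sum, Finset.sum_const, Finset.card_univ,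
    Fintype.card_fin, nsmul_eq_mul]
  ring

lemma polyLaplacian_one_sub_sum_X_sq_mul_of_harmonic {m : ℕ} {ψ : MvPolynomial (Fin n) ℝ}
    (hhom : ψ.IsHomogeneous m) (hharm : polyLaplacian ψ = 0) :
    polyLaplacian ((1 - ∑ i, X i ^ 2) * ψ) = C (-(2 * n + 4 * m : ℝ)) * ψ := by
  rw [polyLaplacian_one_sub_sum_X_sq_mul, hhom.sum_X_mul_pderiv, hharm, nsmul_eq_mul]
  simp only [map_neg, map_add, map_mul, map_ofNat, map_natCast]
  ring

end Laplacian

theorem biharmonic_steklov_eigenfunction_general (n m : ℕ)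
    (ψ : MvPolynomial (Fin n) ℝ) (hhom : ψ.IsHomogeneous m) (hharm : polyLaplacian ψ = 0)
    (φ : MvPolynomial (Fin n) ℝ)
    (hφ : φ = (1 - ∑ i : Fin n, (MvPolynomial.X i) ^ 2) * ψ) :
    polyLaplacian (polyLaplacian φ) = 0 ∧
    (∀ x : Fin n → ℝ, ∑ i, (x i) ^ 2 = 1 → MvPolynomial.eval x φ = 0) ∧
    (∀ x : Fin n → ℝ, ∑ i, (x i) ^ 2 = 1 →
      MvPolynomial.eval x (polyLaplacian φ) +
        ((n : ℝ) + 2 * m) * (-(∑ i, x i * MvPolynomial.eval x (MvPolynomial.pderiv i φ))) = 0) := by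
  subst hφ
  have hΔφ := polyLaplacian_one_sub_sum_X_sq_mul_of_harmonic hhom hharm
  refine ⟨?_, fun x hx => ?_, fun x hx => ?_⟩
  · rw [hΔφ, polyLaplacian_C_mul, hharm, mul_zero]
  · rw [eval_mul, eval_one_sub_sum_X_sq hx, zero_mul]
  · rw [hΔφ, sum_mul_eval_pderiv_one_sub_sum_X_sq_mul hx, eval_mul, eval_C]
    ring

/-- Let `ψ` be a harmonic homogeneous polynomial of degree `m` in `n ≥ 2` variables, and set
`φ(x) = (1 − |x|²)·ψ(x)`.  Then `Δ²φ = 0`, `φ = 0` on the unit sphere, and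
`Δφ + (n+2m)·(∂φ/∂ν) = 0` on the unit sphere, where `ν` is the inward unit normal
(so `∂φ/∂ν = −∑ xᵢ ∂φ/∂xᵢ` at `|x| = 1`); i.e. `φ` is a biharmonic Steklov
eigenfunction of the unit ball with eigenvalue `n + 2m`. -/
theorem biharmonic_steklov_eigenfunction (n m : ℕ) (hn : 2 ≤ n)
    (ψ : MvPolynomial (Fin n) ℝ) (hhom : ψ.IsHomogeneous m) (hharm : polyLaplacian ψ = 0)
    (φ : MvPolynomial (Fin n) ℝ)
    (hφ : φ = (1 - ∑ i : Fin n, (MvPolynomial.X i) ^ 2) * ψ) :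
    polyLaplacian (polyLaplacian φ) = 0 ∧
    (∀ x : Fin n → ℝ, ∑ i, (x i) ^ 2 = 1 → MvPolynomial.eval x φ = 0) ∧
    (∀ x : Fin n → ℝ, ∑ i, (x i) ^ 2 = 1 →
      MvPolynomial.eval x (polyLaplacian φ) +
        ((n : ℝ) + 2 * m) * (-(∑ i, x i * MvPolynomial.eval x (MvPolynomial.pderiv i φ))) = 0) :=
  biharmonic_steklov_eigenfunction_general n m ψ hhom hharm φ hφ
end

section
/- With the same notation, the ODE (a^{nn})²u'''' − 2a^{nn}Q·u'' + Q²·u = 0 on (0,∞) (where Q = ∑a^{jk}η_jη_k > 0) with boundary conditions u(0) = φ, u'(0) = 0, and u bounded at infinity, has the unique bounded solution u(t) = φ·e^{−|ξ'|t}(1 + |ξ'|t) with |ξ'| = sqrt(Q/a^{nn}); and for this solution, √(a^{nn})·(a^{nn}u'''(0) − Q·u'(0)) = 2·Q^{3/2}·φ. -/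
open Real Set Filter Topology

/-- If two functions have the same derivative on `[0,∞)` and agree at `0`, they agree on `[0,∞)`. -/
lemma eqOnIci_of_hasDerivAt {f g f' : ℝ → ℝ}
    (hf : ∀ t, 0 ≤ t → HasDerivAt f (f' t) t)
    (hg : ∀ t, 0 ≤ t → HasDerivAt g (f' t) t)
    (h0 : f 0 = g 0) : ∀ t, 0 ≤ t → f t = g t := by
  intro t ht
  have key := constant_of_has_deriv_right_zero (f := fun s => f s - g s) (a := 0) (b := t)
    (fun s hs => (((hf s hs.1).sub (hg s hs.1)).continuousAt).continuousWithinAt)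
    (fun x hx => by
      have h := (((hf x hx.1).sub (hg x hx.1)).hasDerivWithinAt (s := Ici x))
      rw [sub_self] at h
      exact h)
  have := key t (Set.right_mem_Icc.2 ht)
  simp only [h0, sub_self] at this
  linarith [sub_eq_zero.mp this]

/-- Derivative of `exp (a·s) · f s`. -/
lemma hasDerivAt_exp_mul {a t : ℝ} {f : ℝ → ℝ} {f' : ℝ} (hf : HasDerivAt f f' t) :
    HasDerivAt (fun s => Real.exp (a * s) * f s) (Real.exp (a * t) * (f' + a * f t)) t := by
  have he : HasDerivAt (fun s : ℝ => Real.exp (a * s)) (a * Real.exp (a * t)) t := by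
    have h1 : HasDerivAt (fun s : ℝ => a * s) a t := by
      simpa using HasDerivAt.const_mul a (hasDerivAt_id t)
    simpa [mul_comm] using h1.exp
  have := he.mul hf
  refine this.congr_deriv ?_
  ring

lemma tendsto_exp_neg_mul (a : ℝ) (ha : 0 < a) :
    Tendsto (fun t : ℝ => Real.exp (-a * t)) atTop (𝓝 0) := by
  have h1 : Tendsto (fun t : ℝ => -a * t) atTop atBot :=
    Tendsto.const_mul_atTop_of_neg (by linarith) tendsto_id
  exact Real.tendsto_exp_atBot.comp h1

lemma tendsto_mul_exp_neg_mul (a : ℝ) (ha : 0 < a) :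
    Tendsto (fun t : ℝ => t * Real.exp (-a * t)) atTop (𝓝 0) := by
  have hbase := Real.tendsto_pow_mul_exp_neg_atTop_nhds_zero 1
  have hcomp : Tendsto (fun t : ℝ => a * t) atTop atTop :=
    Tendsto.const_mul_atTop ha tendsto_id
  have h2 : Tendsto (fun t : ℝ => (a * t) ^ 1 * Real.exp (-(a * t))) atTop (𝓝 0) :=
    hbase.comp hcomp
  have h3 : Tendsto (fun t : ℝ => a⁻¹ * ((a * t) ^ 1 * Real.exp (-(a * t)))) atTop (𝓝 (a⁻¹ * 0)) :=
    h2.const_mul _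
  rw [mul_zero] at h3
  refine h3.congr fun t => ?_
  rw [show -(a * t) = -a * t by ring]
  field_simp

/-- With `Q > 0`, `a^{nn} > 0`, `|ξ'| = √(Q/a^{nn})`, the ODE
`(a^{nn})²u'''' − 2a^{nn}Q u'' + Q²u = 0` on `(0,∞)` with `u(0) = φ`, `u'(0) = 0` and
`u` bounded at infinity has the unique bounded solution `u(t) = φ·e^{−|ξ'|t}(1 + |ξ'|t)`;
and for this solution `√(a^{nn})·(a^{nn}u'''(0) − Q·u'(0)) = 2·Q^{3/2}·φ`. -/
theorem dirichlet_to_laplacian_derivative_symbol_ode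
    (ann Q : ℝ) (hann : 0 < ann) (hQ : 0 < Q)
    (ξ : ℝ) (hξ : ξ = Real.sqrt (Q / ann))
    (φ : ℝ) (u : ℝ → ℝ) (hu : ContDiff ℝ 4 u)
    (hode : ∀ t : ℝ, 0 ≤ t →
      ann ^ 2 * iteratedDeriv 4 u t - 2 * ann * Q * iteratedDeriv 2 u t + Q ^ 2 * u t = 0)
    (hbc0 : u 0 = φ) (hbc1 : deriv u 0 = 0)
    (hbd : ∃ C : ℝ, ∀ t : ℝ, 0 ≤ t → |u t| ≤ C) :
    (∀ t : ℝ, 0 ≤ t → u t = φ * Real.exp (-ξ * t) * (1 + ξ * t)) ∧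
    Real.sqrt ann * (ann * iteratedDeriv 3 u 0 - Q * deriv u 0) =
      2 * Q ^ ((3 : ℝ) / 2) * φ := by
  obtain ⟨C, hC⟩ := hbd
  have hξpos : 0 < ξ := hξ ▸ Real.sqrt_pos.2 (div_pos hQ hann)
  have hξ2 : ann * ξ ^ 2 = Q := by
    rw [hξ, Real.sq_sqrt (le_of_lt (div_pos hQ hann))]
    field_simp
  -- derivative chain
  have hD : ∀ n : ℕ, n < 4 → ∀ t : ℝ,
      HasDerivAt (iteratedDeriv n u) (iteratedDeriv (n + 1) u t) t := by
    intro n hn t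
    have h1 : Differentiable ℝ (iteratedDeriv n u) :=
      hu.differentiable_iteratedDeriv n (by exact_mod_cast hn)
    rw [iteratedDeriv_succ]
    exact (h1 t).hasDerivAt
  have h0' : ∀ t, HasDerivAt u (deriv u t) t := fun t => by
    simpa [iteratedDeriv_one, iteratedDeriv_zero] using hD 0 (by norm_num) t
  have h1' : ∀ t, HasDerivAt (deriv u) (iteratedDeriv 2 u t) t := fun t => by
    simpa [iteratedDeriv_one] using hD 1 (by norm_num) t
  have h2' : ∀ t, HasDerivAt (iteratedDeriv 2 u) (iteratedDeriv 3 u t) t := hD 2 (by norm_num)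
  have h3' : ∀ t, HasDerivAt (iteratedDeriv 3 u) (iteratedDeriv 4 u t) t := hD 3 (by norm_num)
  -- normalized ODE
  have hode' : ∀ t : ℝ, 0 ≤ t →
      iteratedDeriv 4 u t = 2 * ξ ^ 2 * iteratedDeriv 2 u t - ξ ^ 4 * u t := by
    intro t ht
    have h := hode t ht
    rw [← hξ2] at h
    have key : ann ^ 2 *
        (iteratedDeriv 4 u t - (2 * ξ ^ 2 * iteratedDeriv 2 u t - ξ ^ 4 * u t)) = 0 := by
      linear_combination h
    rcases mul_eq_zero.mp key with h' | h'
    · exact absurd h' (pow_ne_zero 2 hann.ne')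
    · linarith
  -- g2 = (D+ξ)² u  and its derivative g3
  have hg2' : ∀ t, HasDerivAt
      (fun s => iteratedDeriv 2 u s + 2 * ξ * deriv u s + ξ ^ 2 * u s)
      (iteratedDeriv 3 u t + 2 * ξ * iteratedDeriv 2 u t + ξ ^ 2 * deriv u t) t := fun t =>
    ((h2' t).add (HasDerivAt.const_mul (2 * ξ) (h1' t))).add
      (HasDerivAt.const_mul (ξ ^ 2) (h0' t))
  have hg3' : ∀ t, HasDerivAt
      (fun s => iteratedDeriv 3 u s + 2 * ξ * iteratedDeriv 2 u s + ξ ^ 2 * deriv u s)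
      (iteratedDeriv 4 u t + 2 * ξ * iteratedDeriv 3 u t + ξ ^ 2 * iteratedDeriv 2 u t) t :=
    fun t =>
    ((h3' t).add (HasDerivAt.const_mul (2 * ξ) (h2' t))).add
      (HasDerivAt.const_mul (ξ ^ 2) (h1' t))
  set α : ℝ := iteratedDeriv 2 u 0 + 2 * ξ * deriv u 0 + ξ ^ 2 * u 0 with hαdef
  set β : ℝ := iteratedDeriv 3 u 0 + 2 * ξ * iteratedDeriv 2 u 0 + ξ ^ 2 * deriv u 0
      - ξ * α with hβdef
  -- Step A1 : e^{-ξt}(g3 - ξ g2) is constant (= β) on [0,∞)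
  have hβ : ∀ t, 0 ≤ t → Real.exp (-ξ * t) *
      (iteratedDeriv 3 u t + 2 * ξ * iteratedDeriv 2 u t + ξ ^ 2 * deriv u t
        - ξ * (iteratedDeriv 2 u t + 2 * ξ * deriv u t + ξ ^ 2 * u t)) = β := by
    have := eqOnIci_of_hasDerivAt (f' := fun _ => (0 : ℝ))
      (f := fun s => Real.exp (-ξ * s) *
        (iteratedDeriv 3 u s + 2 * ξ * iteratedDeriv 2 u s + ξ ^ 2 * deriv u s
          - ξ * (iteratedDeriv 2 u s + 2 * ξ * deriv u s + ξ ^ 2 * u s)))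
      (g := fun _ => β)
      (fun t ht => by
        have hd := hasDerivAt_exp_mul (a := -ξ) (t := t)
          ((hg3' t).sub (HasDerivAt.const_mul ξ (hg2' t)))
        refine hd.congr_deriv ?_
        rw [hode' t ht]
        simp only [Pi.sub_apply]
        ring)
      (fun t _ => hasDerivAt_const t β)
      (by simp [hβdef, hαdef])
    exact this
  -- Step A2 : e^{-ξt} g2 = α + β t on [0,∞)
  have hA : ∀ t, 0 ≤ t → Real.exp (-ξ * t) *
      (iteratedDeriv 2 u t + 2 * ξ * deriv u t + ξ ^ 2 * u t) = α + β * t := by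
    have hlin : ∀ t : ℝ, HasDerivAt (fun s : ℝ => α + β * s) β t := fun t => by
      simpa using ((hasDerivAt_id t).const_mul β).const_add α
    exact eqOnIci_of_hasDerivAt (f' := fun _ => β)
      (fun t ht => by
        have hd := hasDerivAt_exp_mul (a := -ξ) (t := t) (hg2' t)
        have he : Real.exp (-ξ * t) *
            ((iteratedDeriv 3 u t + 2 * ξ * iteratedDeriv 2 u t + ξ ^ 2 * deriv u t)
              + -ξ * (iteratedDeriv 2 u t + 2 * ξ * deriv u t + ξ ^ 2 * u t)) = β := by
          rw [← hβ t ht]; ring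
        rw [← he]
        exact hd)
      (fun t _ => hlin t)
      (by simp [hαdef])
  -- value of g2 on [0,∞)
  have hg2val : ∀ t, 0 ≤ t →
      iteratedDeriv 2 u t + 2 * ξ * deriv u t + ξ ^ 2 * u t
        = (α + β * t) * Real.exp (ξ * t) := by
    intro t ht
    have h := hA t ht
    have e : Real.exp (ξ * t) * Real.exp (-ξ * t) = 1 := by
      rw [← Real.exp_add, show ξ * t + -ξ * t = 0 by ring, Real.exp_zero]
    linear_combination Real.exp (ξ * t) * h
      - (iteratedDeriv 2 u t + 2 * ξ * deriv u t + ξ ^ 2 * u t) * e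
  -- Step B : particular solution data
  set c : ℝ := α / (4 * ξ ^ 2) - β / (4 * ξ ^ 3) with hcdef
  set d : ℝ := β / (4 * ξ ^ 2) with hddef
  have hcd1 : 4 * ξ ^ 2 * d = β := by rw [hddef]; field_simp
  have hcd2 : 4 * ξ ^ 2 * c + 4 * ξ * d = α := by
    rw [hcdef, hddef]; field_simp; ring
  set B : ℝ := (deriv u 0 + ξ * u 0) - (2 * ξ * c + d) with hBdef
  set A : ℝ := u 0 - c with hAdef
  -- first integration : e^{ξt}(u' + ξ u) = e^{2ξt}(2ξ(c+dt)+d) + B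
  have hinner : ∀ t : ℝ, HasDerivAt (fun s : ℝ => c + d * s) d t := fun t => by
    simpa using ((hasDerivAt_id t).const_mul d).const_add c
  have hp1 : ∀ t, 0 ≤ t → Real.exp (ξ * t) * (deriv u t + ξ * u t)
      = Real.exp (2 * ξ * t) * (2 * ξ * (c + d * t) + d) + B := by
    refine eqOnIci_of_hasDerivAt (f' := fun t => Real.exp (2 * ξ * t) * (α + β * t)) ?_ ?_ ?_
    · intro t ht
      have hd := hasDerivAt_exp_mul (a := ξ) (t := t)
        ((h1' t).add (HasDerivAt.const_mul ξ (h0' t)))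
      have e2 : Real.exp (ξ * t) * Real.exp (ξ * t) = Real.exp (2 * ξ * t) := by
        rw [← Real.exp_add]; ring_nf
      have key : Real.exp (ξ * t) *
          ((iteratedDeriv 2 u t + ξ * deriv u t) + ξ * (deriv u t + ξ * u t))
          = Real.exp (2 * ξ * t) * (α + β * t) := by
        have h := hg2val t ht
        linear_combination Real.exp (ξ * t) * h + (α + β * t) * e2
      simpa only [Pi.add_apply, key] using hd
    · intro t _
      have hd := hasDerivAt_exp_mul (a := 2 * ξ) (t := t)
        ((HasDerivAt.const_mul (2 * ξ) (hinner t)).add_const d)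
      have hd2 := hd.add_const B
      refine hd2.congr_deriv ?_
      linear_combination (Real.exp (2 * ξ * t) * t) * hcd1 + Real.exp (2 * ξ * t) * hcd2
    · simp [hBdef]
  -- second integration : e^{ξt} u = e^{2ξt}(c+dt) + B t + A
  have husol : ∀ t, 0 ≤ t → Real.exp (ξ * t) * u t
      = Real.exp (2 * ξ * t) * (c + d * t) + B * t + A := by
    refine eqOnIci_of_hasDerivAt
      (f' := fun t => Real.exp (2 * ξ * t) * (2 * ξ * (c + d * t) + d) + B) ?_ ?_ ?_
    · intro t ht
      have hd := hasDerivAt_exp_mul (a := ξ) (t := t) (h0' t)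
      have key : Real.exp (ξ * t) * (deriv u t + ξ * u t)
          = Real.exp (2 * ξ * t) * (2 * ξ * (c + d * t) + d) + B := hp1 t ht
      simpa only [key] using hd
    · intro t _
      have hd := (hasDerivAt_exp_mul (a := 2 * ξ) (t := t) (hinner t))
      have hd2 := (hd.add (HasDerivAt.const_mul B (hasDerivAt_id t))).add_const A
      refine hd2.congr_deriv ?_
      ring
    · simp [hAdef]
  -- Step C : boundedness forces c = d = 0
  have heq : ∀ᶠ t in atTop, c + d * t =
      Real.exp (-ξ * t) * u t - Real.exp (-(2 * ξ) * t) * (B * t + A) := by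
    filter_upwards [eventually_ge_atTop (0 : ℝ)] with t ht
    have h := husol t ht
    have e1 : Real.exp (-(2 * ξ) * t) * Real.exp (2 * ξ * t) = 1 := by
      rw [← Real.exp_add, show -(2 * ξ) * t + 2 * ξ * t = 0 by ring, Real.exp_zero]
    have e2 : Real.exp (-(2 * ξ) * t) * Real.exp (ξ * t) = Real.exp (-ξ * t) := by
      rw [← Real.exp_add]; ring_nf
    linear_combination (-(Real.exp (-(2 * ξ) * t))) * h + (u t) * e2 - (c + d * t) * e1
  have hT1 : Tendsto (fun t => Real.exp (-ξ * t) * u t) atTop (𝓝 0) := by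
    have hbound : ∀ᶠ t in atTop, ‖Real.exp (-ξ * t) * u t‖ ≤ C * Real.exp (-ξ * t) := by
      filter_upwards [eventually_ge_atTop (0 : ℝ)] with t ht
      rw [Real.norm_eq_abs, abs_mul, Real.abs_exp]
      calc Real.exp (-ξ * t) * |u t| ≤ Real.exp (-ξ * t) * C :=
            mul_le_mul_of_nonneg_left (hC t ht) (Real.exp_pos _).le
        _ = C * Real.exp (-ξ * t) := mul_comm _ _
    have hg : Tendsto (fun t => C * Real.exp (-ξ * t)) atTop (𝓝 0) := by
      have := (tendsto_exp_neg_mul ξ hξpos).const_mul C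
      simpa using this
    exact squeeze_zero_norm' hbound hg
  have hT2 : Tendsto (fun t => Real.exp (-(2 * ξ) * t) * (B * t + A)) atTop (𝓝 0) := by
    have h1 : Tendsto (fun t : ℝ => B * (t * Real.exp (-(2 * ξ) * t))) atTop (𝓝 0) := by
      have := (tendsto_mul_exp_neg_mul (2 * ξ) (by linarith)).const_mul B
      simpa using this
    have h2 : Tendsto (fun t : ℝ => A * Real.exp (-(2 * ξ) * t)) atTop (𝓝 0) := by
      have := (tendsto_exp_neg_mul (2 * ξ) (by linarith)).const_mul A
      simpa using this
    have := h1.add h2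
    rw [add_zero] at this
    refine this.congr fun t => ?_
    ring
  have htend : Tendsto (fun t => c + d * t) atTop (𝓝 0) := by
    have := hT1.sub hT2
    rw [sub_zero] at this
    exact Tendsto.congr' (Filter.EventuallyEq.symm heq) this
  have hd0 : d = 0 := by
    rcases lt_trichotomy d 0 with h | h | h
    · exfalso
      have : Tendsto (fun t : ℝ => c + d * t) atTop atBot :=
        tendsto_atBot_add_const_left _ c (Tendsto.const_mul_atTop_of_neg h tendsto_id)
      exact not_tendsto_atBot_of_tendsto_nhds htend this
    · exact h
    · exfalso
      have : Tendsto (fun t : ℝ => c + d * t) atTop atTop :=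
        tendsto_atTop_add_const_left _ c (Tendsto.const_mul_atTop h tendsto_id)
      exact not_tendsto_atTop_of_tendsto_nhds htend this
  have hc0 : c = 0 := by
    have h1 : Tendsto (fun t : ℝ => c + d * t) atTop (𝓝 c) := by
      simp only [hd0, zero_mul, add_zero]
      exact tendsto_const_nhds
    exact tendsto_nhds_unique h1 htend
  have hβ0 : β = 0 := by rw [← hcd1, hd0]; ring
  have hα0 : α = 0 := by rw [← hcd2, hd0, hc0]; ring
  have hv2 : iteratedDeriv 2 u 0 = -ξ ^ 2 * φ := by
    have := hα0
    rw [hαdef, hbc0, hbc1] at this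
    linarith
  have hv3 : iteratedDeriv 3 u 0 = 2 * ξ ^ 3 * φ := by
    have := hβ0
    rw [hβdef, hα0, hbc1, hv2] at this
    linarith [this]
  have hAval : A = φ := by rw [hAdef, hbc0, hc0]; ring
  have hBval : B = ξ * φ := by rw [hBdef, hbc0, hbc1, hc0, hd0]; ring
  constructor
  · intro t ht
    have h := husol t ht
    rw [hc0, hd0, hAval, hBval] at h
    have e : Real.exp (-ξ * t) * Real.exp (ξ * t) = 1 := by
      rw [← Real.exp_add, show -ξ * t + ξ * t = 0 by ring, Real.exp_zero]
    linear_combination Real.exp (-ξ * t) * h - u t * e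
  · have hsa : Real.sqrt ann ^ 2 = ann := Real.sq_sqrt hann.le
    have hsq2 : Real.sqrt Q ^ 2 = Q := Real.sq_sqrt hQ.le
    have hxi : ξ * Real.sqrt ann = Real.sqrt Q := by
      rw [hξ, ← Real.sqrt_mul (le_of_lt (div_pos hQ hann)), div_mul_cancel₀ _ hann.ne']
    have h32 : Q ^ ((3 : ℝ) / 2) = Q * Real.sqrt Q := by
      rw [show (3 : ℝ) / 2 = 1 + 1 / 2 by norm_num, Real.rpow_add hQ, Real.rpow_one,
        ← Real.sqrt_eq_rpow]
    rw [hv3, hbc1, h32]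
    linear_combination (-(2 * φ * ξ ^ 3 * Real.sqrt ann)) * hsa + (2 * φ * Real.sqrt Q) * hsq2
      + (2 * φ * (ξ ^ 2 * Real.sqrt ann ^ 2 + ξ * Real.sqrt ann * Real.sqrt Q
          + Real.sqrt Q ^ 2)) * hxi
end

section
/- For the unit disk B ⊂ ℝ², define for each m ≥ 1 the eigenvalues μ_m by μ_m³ = 2m²(m+1). Then the counting function B(μ) = #{eigenvalues ≤ μ} for the second biharmonic Steklov problem on the disk (with ϱ ≡ 1) satisfies B(μ_m) = 2m + 1 = (ω₁·vol(∂B)/(2π))·(m + 1/2), where ω₁ = 2 and vol(∂B) = 2π; and since m ~ μ_m/∛2 as m → ∞, B(μ_m) ~ (ω₁·vol(∂B)/(∛16·π))·(μ_m + 1/2). -/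
/-!
The map `k ↦ (2k²(k+1))^(1/3)` is strictly increasing, so `{k ≥ 1 : μ_k ≤ μ_m} = {1, …, m}` and
`B(μ_m) = 2m + 1` exactly. Since `2k²(k+1) ~ 2k³`, taking cube roots gives `μ_k ~ ∛2·k`; as
`∛16 = 2∛2`, the normalising constant is `2/∛2`, and both sides of the last claim are `~ 2m`.
-/

open Real Filter Asymptotics

theorem StrictMono.natCard_setOf_one_le_and_le {α : Type*} [Preorder α] {f : ℕ → α}
    (hf : StrictMono f) (m : ℕ) : Nat.card {k : ℕ | 1 ≤ k ∧ f k ≤ f m} = m := by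
  have hIcc : {k : ℕ | 1 ≤ k ∧ f k ≤ f m} = Set.Icc 1 m := by
    ext k
    simp only [Set.mem_ofPred_eq, Set.mem_Icc, hf.le_iff_le]
  rw [hIcc, Nat.card_coe_set_eq, Set.ncard_Icc_nat, Nat.add_sub_cancel]

theorem strictMono_two_mul_sq_mul_succ : StrictMono fun k : ℕ => 2 * (k : ℝ) ^ 2 * (k + 1) := by
  intro a b hab
  have hab' : (a : ℝ) < b := by exact_mod_cast hab
  dsimp only
  gcongr

theorem strictMono_rpow_third_two_sq_mul_succ :
    StrictMono fun k : ℕ => (2 * (k : ℝ) ^ 2 * (k + 1)) ^ (1 / 3 : ℝ) := fun _ _ hab =>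
  rpow_lt_rpow (by positivity) (strictMono_two_mul_sq_mul_succ hab) (by norm_num)

theorem isEquivalent_two_sq_mul_succ :
    (fun k : ℕ => 2 * (k : ℝ) ^ 2 * (k + 1)) ~[atTop] fun k => 2 * (k : ℝ) ^ 3 := by
  have hsq : (fun k : ℕ => 2 * (k : ℝ) ^ 2) =o[atTop] fun k => 2 * (k : ℝ) ^ 3 :=
    (((isLittleO_pow_pow_atTop_of_lt (by norm_num : 2 < 3)).comp_tendsto
      tendsto_natCast_atTop_atTop).const_mul_left 2).const_mul_right two_ne_zero
  refine (IsEquivalent.refl.add_isLittleO hsq).congr_left (Eventually.of_forall fun k => ?_)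
  simp only [Pi.add_apply]
  ring

theorem isEquivalent_rpow_third_two_sq_mul_succ :
    (fun k : ℕ => (2 * (k : ℝ) ^ 2 * (k + 1)) ^ (1 / 3 : ℝ)) ~[atTop]
      fun k => (2 : ℝ) ^ (1 / 3 : ℝ) * k := by
  refine (isEquivalent_two_sq_mul_succ.rpow (r := 1 / 3) fun k => by positivity).congr_right
    (Eventually.of_forall fun k => ?_)
  simp only [Pi.pow_apply]
  rw [mul_rpow (by norm_num) (by positivity), ← rpow_natCast, ← rpow_mul (by positivity)]
  norm_num

theorem rpow_third_sixteen : (16 : ℝ) ^ (1 / 3 : ℝ) = 2 * 2 ^ (1 / 3 : ℝ) := by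
  rw [show (16 : ℝ) = 2 ^ (1 + 3 : ℝ) by norm_num, ← rpow_mul (by norm_num),
    add_mul, rpow_add (by norm_num), mul_comm]
  norm_num

theorem isEquivalent_two_mul_add_one_of_isEquivalent {a : ℕ → ℝ} {c : ℝ} (hc : c ≠ 0)
    (ha : a ~[atTop] fun m => c * m) :
    (fun m : ℕ => (2 * m + 1 : ℝ)) ~[atTop] fun m => 2 / c * (a m + 1 / 2) := by
  have hlin (d : ℝ) (hd : d ≠ 0) : Tendsto (norm ∘ fun m : ℕ => d * (m : ℝ)) atTop atTop := by
    simpa [Function.comp_def, norm_mul] using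
      tendsto_natCast_atTop_atTop.const_mul_atTop (abs_pos.2 hd)
  have hlhs : (fun m : ℕ => (2 * m + 1 : ℝ)) ~[atTop] fun m => 2 * (m : ℝ) :=
    IsEquivalent.refl.add_const_of_norm_tendsto_atTop (hlin 2 two_ne_zero)
  have hrhs : (fun m => 2 / c * (a m + 1 / 2)) ~[atTop] fun m : ℕ => 2 * (m : ℝ) := by
    refine (IsEquivalent.refl.mul (ha.add_const_of_norm_tendsto_atTop (hlin c hc))).congr_right
      (Eventually.of_forall fun m => ?_)
    simp only [Pi.mul_apply]
    field_simp
  exact hlhs.trans hrhs.symm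

/-- For the unit disk, the second biharmonic Steklov problem has eigenvalue `μ₀ = 0`
(multiplicity 1) and eigenvalues `μ_m` with `μ_m³ = 2m²(m+1)` of multiplicity 2 for
`m ≥ 1`.  The counting function `B(μ) = 1 + 2·#{k ≥ 1 : μ_k ≤ μ}` satisfies
`B(μ_m) = 2m + 1 = (ω₁·vol(∂B)/(2π))·(m + 1/2)` with `ω₁ = 2`, `vol(∂B) = 2π`;
and since `m ~ μ_m/∛2` as `m → ∞`,
`B(μ_m) ~ (ω₁·vol(∂B)/(∛16·π))·(μ_m + 1/2)`. -/
theorem disk_biharmonic_counting (μ : ℕ → ℝ)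
    (hμ : ∀ k : ℕ, μ k = (2 * (k : ℝ) ^ 2 * ((k : ℝ) + 1)) ^ ((1 : ℝ) / 3))
    (B : ℝ → ℕ)
    (hB : ∀ x : ℝ, B x = 1 + 2 * Nat.card {k : ℕ | 1 ≤ k ∧ μ k ≤ x}) :
    (∀ m : ℕ, 1 ≤ m →
      B (μ m) = 2 * m + 1 ∧
      (B (μ m) : ℝ) = (2 * (2 * π)) / (2 * π) * ((m : ℝ) + 1 / 2)) ∧
    Tendsto (fun m : ℕ => μ m / ((2 : ℝ) ^ ((1 : ℝ) / 3) * (m : ℝ))) atTop (nhds 1) ∧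
    Tendsto (fun m : ℕ =>
        (B (μ m) : ℝ) / ((2 * (2 * π)) / ((16 : ℝ) ^ ((1 : ℝ) / 3) * π) * (μ m + 1 / 2)))
      atTop (nhds 1) := by
  have hμ_eq : μ = fun k : ℕ => (2 * (k : ℝ) ^ 2 * ((k : ℝ) + 1)) ^ ((1 : ℝ) / 3) := funext hμ
  have hμ_nonneg (m : ℕ) : 0 ≤ μ m := hμ m ▸ by positivity
  have hμ_mono : StrictMono μ := hμ_eq ▸ strictMono_rpow_third_two_sq_mul_succ
  have hBμ (m : ℕ) : B (μ m) = 2 * m + 1 := by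
    rw [hB, hμ_mono.natCard_setOf_one_le_and_le, add_comm, mul_comm]
  have hμ_equiv : μ ~[atTop] fun m => (2 : ℝ) ^ ((1 : ℝ) / 3) * m :=
    hμ_eq ▸ isEquivalent_rpow_third_two_sq_mul_succ
  have hc : (2 : ℝ) ^ ((1 : ℝ) / 3) ≠ 0 := by positivity
  refine ⟨fun m _ => ⟨hBμ m, ?_⟩, ?_, ?_⟩
  · rw [hBμ m]
    push_cast
    field_simp
  · refine (isEquivalent_iff_tendsto_one ?_).1 hμ_equiv
    filter_upwards [eventually_ne_atTop 0] with m hm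
    positivity
  · have hconst : 2 * (2 * π) / ((16 : ℝ) ^ ((1 : ℝ) / 3) * π) = 2 / (2 : ℝ) ^ ((1 : ℝ) / 3) := by
      rw [rpow_third_sixteen]
      field_simp
    simp_rw [hBμ, hconst]
    push_cast
    refine (isEquivalent_iff_tendsto_one (Eventually.of_forall fun m => ?_)).1
      (isEquivalent_two_mul_add_one_of_isEquivalent hc hμ_equiv)
    have := hμ_nonneg m
    positivity
end
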